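/- arXiv:1712.04424 — 8 statements merged into one kernel-verified Lean document; each statement's English description precedes it below -/
import Mathlib

section
/- Let Γ be a finite group, n a natural number, ρ : Γ → Matrix (Fin n) (Fin n) (ZMod 2) a map with ρ 1 = 1 and ρ (g * h) = ρ g * ρ h for all g, h ∈ Γ, and f : Fin n → ZMod 2 a vector such that the orbit family g ↦ ρ g *ᵥ f is a binary Parseval frame. Let Θ be the analysis matrix of this family. Then every ρ g is unitary, i.e. (ρ g)ᵀ * ρ g = 1 and ρ g * (ρ g)ᵀ = 1, and moreover ρ g = Θᵀ * Λ g * Θ for every g ∈ Γ, where Λ g is the left regular representation matrix of g. -/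
open Matrix

/-- A family `f : J → (Fin n → ZMod 2)` is a binary Parseval frame if the
reconstruction identity holds for every vector. -/
def IsBPF {J : Type*} [Fintype J] {n : ℕ} (f : J → Fin n → ZMod 2) : Prop :=
  ∀ x : Fin n → ZMod 2, x = ∑ j, (∑ i, x i * f j i) • f j

/-- Left regular representation matrices over `ZMod 2`. -/
def lreg (Γ : Type*) [Group Γ] [DecidableEq Γ] (g : Γ) : Matrix Γ Γ (ZMod 2) :=
  Matrix.of fun a b => if a * b⁻¹ = g then 1 else 0

theorem stmt0 {Γ : Type*} [Group Γ] [Fintype Γ] [DecidableEq Γ] {n : ℕ}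
    (ρ : Γ → Matrix (Fin n) (Fin n) (ZMod 2))
    (hone : ρ 1 = 1) (hmul : ∀ g h : Γ, ρ (g * h) = ρ g * ρ h)
    (f : Fin n → ZMod 2)
    (hPF : IsBPF fun g : Γ => ρ g *ᵥ f)
    (Θ : Matrix Γ (Fin n) (ZMod 2))
    (hΘ : ∀ (g : Γ) (i : Fin n), Θ g i = (ρ g *ᵥ f) i) :
    ∀ g : Γ, (ρ g)ᵀ * ρ g = 1 ∧ ρ g * (ρ g)ᵀ = 1 ∧ ρ g = Θᵀ * lreg Γ g * Θ := by
  have hTT : Θᵀ * Θ = 1 := by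
    ext i k
    have h := congrFun (hPF (Pi.single i 1)) k
    simp only [Fintype.sum_apply, Pi.smul_apply, smul_eq_mul] at h
    rw [Matrix.mul_apply]
    have : ∀ g : Γ, (∑ i' : Fin n, (Pi.single i 1 : Fin n → ZMod 2) i' * (ρ g *ᵥ f) i') = (ρ g *ᵥ f) i := by
      intro g
      rw [Finset.sum_eq_single i]
      · simp
      · intro b _ hb
        simp [Pi.single_apply, hb]
      · simp
    simp only [this] at h
    rw [Matrix.one_apply]
    simp only [Matrix.transpose_apply, hΘ]
    rw [← h]
    simp [Pi.single_apply, eq_comm]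
  -- Θ * (ρ g)ᵀ reindexes rows
  have hshift : ∀ g : Γ, Θ * (ρ g)ᵀ = Θ.submatrix (fun a => g * a) id := by
    intro g
    ext a i
    simp only [Matrix.mul_apply, Matrix.transpose_apply, Matrix.submatrix_apply, id]
    rw [hΘ (g * a) i, hmul, ← Matrix.mulVec_mulVec]
    show _ = ∑ x, ρ g i x * (ρ a *ᵥ f) x
    simp only [← hΘ]
    exact Finset.sum_congr rfl fun x _ => mul_comm _ _
  have hright : ∀ g : Γ, ρ g * (ρ g)ᵀ = 1 := by
    intro g
    have key : (Θ * (ρ g)ᵀ)ᵀ * (Θ * (ρ g)ᵀ) = 1 := by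
      rw [hshift g]
      ext i k
      rw [Matrix.mul_apply]
      have := congrFun (congrFun hTT i) k
      rw [Matrix.mul_apply] at this
      rw [← this]
      exact Fintype.sum_bijective (fun a => g * a)
        (Group.mulLeft_bijective g) _ _ (fun a => rfl)
    calc ρ g * (ρ g)ᵀ = ρ g * (Θᵀ * Θ) * (ρ g)ᵀ := by rw [hTT, mul_one]
      _ = (Θ * (ρ g)ᵀ)ᵀ * (Θ * (ρ g)ᵀ) := by
          rw [Matrix.transpose_mul, Matrix.transpose_transpose]
          simp only [Matrix.mul_assoc]
      _ = 1 := key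
  intro g
  have h2 := hright g
  have h1 : (ρ g)ᵀ * ρ g = 1 := mul_eq_one_comm.mp h2
  refine ⟨h1, h2, ?_⟩
  have hinv : ρ g⁻¹ = (ρ g)ᵀ := by
    have : ρ g⁻¹ * ρ g = 1 := by rw [← hmul, inv_mul_cancel, hone]
    calc ρ g⁻¹ = ρ g⁻¹ * (ρ g * (ρ g)ᵀ) := by rw [h2, mul_one]
      _ = (ρ g⁻¹ * ρ g) * (ρ g)ᵀ := by rw [mul_assoc]
      _ = (ρ g)ᵀ := by rw [this, one_mul]
  have hΛ : lreg Γ g * Θ = Θ * (ρ g⁻¹)ᵀ := by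
    rw [hshift g⁻¹]
    ext a i
    rw [Matrix.mul_apply, Finset.sum_eq_single (g⁻¹ * a)]
    · simp [lreg]
    · intro b _ hb
      have : a * b⁻¹ ≠ g := by
        intro hh; apply hb; rw [← hh]; group
      simp [lreg, this]
    · simp
  rw [Matrix.mul_assoc, hΛ, ← Matrix.mul_assoc, hTT, Matrix.one_mul, hinv, Matrix.transpose_transpose]
end

section
/- Let Γ be a finite group, n a natural number, ρ : Γ → Matrix (Fin n) (Fin n) (ZMod 2) a map with ρ 1 = 1 and ρ (g * h) = ρ g * ρ h for all g, h ∈ Γ, and f : Fin n → ZMod 2 a vector such that the orbit family f_g := ρ g *ᵥ f is a binary Parseval frame. Then the Gramian G of this family satisfies G = ∑ g ∈ Γ, η g • R g, where η : Γ → ZMod 2 is defined by η g = ⟪f_g, f⟫ = ∑ i, (ρ g *ᵥ f) i * f i, and R g is the right regular representation matrix of g. -/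
open Matrix

/-- Right regular representation matrices over `ZMod 2`. -/
def rreg (Γ : Type*) [Group Γ] [DecidableEq Γ] (g : Γ) : Matrix Γ Γ (ZMod 2) :=
  Matrix.of fun a b => if a⁻¹ * b = g then 1 else 0

theorem stmt1 {Γ : Type*} [Group Γ] [Fintype Γ] [DecidableEq Γ] {n : ℕ}
    (ρ : Γ → Matrix (Fin n) (Fin n) (ZMod 2))
    (hone : ρ 1 = 1) (hmul : ∀ g h : Γ, ρ (g * h) = ρ g * ρ h)
    (f : Fin n → ZMod 2)
    (hPF : IsBPF fun g : Γ => ρ g *ᵥ f)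
    (G : Matrix Γ Γ (ZMod 2))
    (hG : ∀ a b : Γ, G a b = ∑ i, (ρ b *ᵥ f) i * (ρ a *ᵥ f) i) :
    G = ∑ g : Γ, (∑ i, (ρ g *ᵥ f) i * f i) • rreg Γ g := by
  classical
  set F : Γ → Fin n → ZMod 2 := fun g => ρ g *ᵥ f with hF
  set M : Matrix (Fin n) Γ (ZMod 2) := Matrix.of fun i g => F g i with hMdef
  -- Parseval ⇒ M * Mᵀ = 1
  have hMMt : M * Mᵀ = 1 := by
    ext i i'
    have h := congrFun (hPF (Pi.single i' 1)) i
    simp only [Finset.sum_apply, Pi.smul_apply, smul_eq_mul] at h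
    have hcoef : ∀ g : Γ, (∑ j, (Pi.single i' 1 : Fin n → ZMod 2) j * F g j) = F g i' := by
      intro g
      simp [Pi.single_apply, ite_mul]
    rw [Matrix.mul_apply]
    simp only [Matrix.transpose_apply, hMdef, Matrix.of_apply]
    have : ∑ g, F g i * F g i' = (Pi.single i' 1 : Fin n → ZMod 2) i := by
      rw [h]
      apply Finset.sum_congr rfl
      intro g _
      rw [hcoef g]; ring
    rw [this]
    simp [Matrix.one_apply, Pi.single_apply]
  -- column-permutation matrices
  set P : Γ → Matrix Γ Γ (ZMod 2) :=
    fun h => Matrix.of fun g g' => if g = h * g' then 1 else 0 with hPdef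
  have hρM : ∀ h : Γ, ρ h * M = M * P h := by
    intro h
    ext i g'
    rw [Matrix.mul_apply, Matrix.mul_apply]
    have hl : ∑ j, ρ h i j * M j g' = F (h * g') i := by
      have : (ρ h *ᵥ F g') i = F (h * g') i := by
        simp only [hF]
        rw [Matrix.mulVec_mulVec, ← hmul]
      rw [← this]
      simp [Matrix.mulVec, dotProduct, hMdef]
    have hr : ∑ g, M i g * P h g g' = F (h * g') i := by
      simp [hPdef, hMdef, mul_ite, Finset.sum_ite_eq]
    rw [hl, hr]
  have hPt : ∀ h : Γ, (P h)ᵀ = P h⁻¹ := by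
    intro h
    ext g g'
    simp only [Matrix.transpose_apply, hPdef, Matrix.of_apply]
    have : (g' = h * g) ↔ (g = h⁻¹ * g') := by constructor <;> (intro e; subst e; group)
    simp [this]
  have hρeq : ∀ h : Γ, ρ h = M * P h * Mᵀ := by
    intro h
    calc ρ h = ρ h * (M * Mᵀ) := by rw [hMMt, mul_one]
      _ = (ρ h * M) * Mᵀ := by rw [← Matrix.mul_assoc]
      _ = M * P h * Mᵀ := by rw [hρM h]
  have hρt : ∀ h : Γ, (ρ h)ᵀ = ρ h⁻¹ := by
    intro h
    rw [hρeq h, hρeq h⁻¹]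
    rw [Matrix.transpose_mul, Matrix.transpose_mul, Matrix.transpose_transpose, hPt, ← Matrix.mul_assoc]
  -- dot product transpose lemma
  have key : ∀ (A : Matrix (Fin n) (Fin n) (ZMod 2)) (u v : Fin n → ZMod 2),
      (A *ᵥ u) ⬝ᵥ v = u ⬝ᵥ (Aᵀ *ᵥ v) := by
    intro A u v
    rw [dotProduct_comm, Matrix.dotProduct_mulVec, ← Matrix.mulVec_transpose,
      dotProduct_comm]
  -- finish entrywise
  ext a b
  have hL : G a b = f ⬝ᵥ (ρ (b⁻¹ * a) *ᵥ f) := by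
    rw [hG a b]
    have : (∑ i, (ρ b *ᵥ f) i * (ρ a *ᵥ f) i) = (ρ b *ᵥ f) ⬝ᵥ (ρ a *ᵥ f) := rfl
    rw [this, key, hρt, Matrix.mulVec_mulVec, ← hmul]
  have hR : (∑ g : Γ, (∑ i, (ρ g *ᵥ f) i * f i) • rreg Γ g) a b
      = f ⬝ᵥ (ρ (b⁻¹ * a) *ᵥ f) := by
    rw [Matrix.sum_apply]
    have h1 : ∀ g : Γ, ((∑ i, (ρ g *ᵥ f) i * f i) • rreg Γ g) a b
        = (∑ i, (ρ g *ᵥ f) i * f i) * (if a⁻¹ * b = g then 1 else 0) := by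
      intro g; simp [rreg, Matrix.smul_apply]
    simp only [h1]
    rw [Finset.sum_eq_single (a⁻¹ * b)]
    · rw [if_pos rfl, mul_one]
      have : (∑ i, (ρ (a⁻¹ * b) *ᵥ f) i * f i) = (ρ (a⁻¹ * b) *ᵥ f) ⬝ᵥ f := rfl
      rw [this, key, hρt]
      congr 1
      group
    · intro g _ hg
      rw [if_neg (fun e => hg e.symm), mul_zero]
    · intro h; exact absurd (Finset.mem_univ _) h
  rw [hL, hR]
end

section
/- Let Γ be a finite group and f : Γ → (Fin n → ZMod 2) a binary Parseval frame indexed by Γ, with analysis matrix Θ and Gramian G. Suppose there exists η : Γ → ZMod 2 with G = ∑ g ∈ Γ, η g • R g, where R g is the right regular representation matrix. Define ρ g := Θᵀ * Λ g * Θ, where Λ g is the left regular representation matrix. Then ρ 1 = 1, ρ (g * h) = ρ g * ρ h for all g, h ∈ Γ, each ρ g is unitary ((ρ g)ᵀ * ρ g = 1 and ρ g * (ρ g)ᵀ = 1), and ρ g *ᵥ f 1 = f g for every g ∈ Γ. -/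
open Matrix

lemma lreg_one (Γ : Type*) [Group Γ] [DecidableEq Γ] : lreg Γ 1 = 1 := by
  ext a b
  simp only [lreg, of_apply, Matrix.one_apply, mul_inv_eq_one]

lemma lreg_mul (Γ : Type*) [Group Γ] [Fintype Γ] [DecidableEq Γ] (g h : Γ) :
    lreg Γ g * lreg Γ h = lreg Γ (g * h) := by
  ext a b
  simp only [lreg, Matrix.mul_apply, of_apply]
  rw [Finset.sum_eq_single (g⁻¹ * a)]
  · have h1 : a * (g⁻¹ * a)⁻¹ = g := by group
    have h2 : (g⁻¹ * a) * b⁻¹ = h ↔ a * b⁻¹ = g * h := by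
      constructor
      · intro hh; rw [← hh]; group
      · intro hh; rw [mul_assoc, hh]; group
    rw [if_pos h1, one_mul]
    congr 1
    simp only [eq_iff_iff]
    exact h2
  · intro c _ hc
    have : a * c⁻¹ ≠ g := by
      intro hcc
      exact hc (by rw [← hcc]; group)
    simp [this]
  · intro hn; exact absurd (Finset.mem_univ _) hn

lemma lreg_transpose (Γ : Type*) [Group Γ] [DecidableEq Γ] (g : Γ) :
    (lreg Γ g)ᵀ = lreg Γ g⁻¹ := by
  ext a b
  simp only [lreg, transpose_apply, of_apply]
  congr 1
  simp only [eq_iff_iff]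
  constructor
  · intro hh; rw [← hh]; group
  · intro hh
    have := congrArg Inv.inv hh
    simpa [_root_.mul_inv_rev] using this

lemma lreg_rreg_comm (Γ : Type*) [Group Γ] [Fintype Γ] [DecidableEq Γ] (g h : Γ) :
    lreg Γ g * rreg Γ h = rreg Γ h * lreg Γ g := by
  ext a b
  simp only [lreg, rreg, Matrix.mul_apply, of_apply]
  rw [Finset.sum_eq_single (g⁻¹ * a), Finset.sum_eq_single (a * h)]
  · have h1 : a * (g⁻¹ * a)⁻¹ = g := by group
    have h2 : a⁻¹ * (a * h) = h := by group
    have h3 : (g⁻¹ * a)⁻¹ * b = h ↔ (a * h) * b⁻¹ = g := by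
      constructor
      · intro hh; rw [← hh]; group
      · intro hh; rw [← hh]; group
    rw [if_pos h1, if_pos h2, one_mul, one_mul]
    congr 1
    simp only [eq_iff_iff]
    exact h3
  · intro c _ hc
    have : a⁻¹ * c ≠ h := fun hcc => hc (by rw [← hcc]; group)
    simp [this]
  · intro hn; exact absurd (Finset.mem_univ _) hn
  · intro c _ hc
    have : a * c⁻¹ ≠ g := fun hcc => hc (by rw [← hcc]; group)
    simp [this]
  · intro hn; exact absurd (Finset.mem_univ _) hn

theorem stmt2 {Γ : Type*} [Group Γ] [Fintype Γ] [DecidableEq Γ] {n : ℕ}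
    (f : Γ → Fin n → ZMod 2) (hPF : IsBPF f)
    (Θ : Matrix Γ (Fin n) (ZMod 2)) (hΘ : ∀ (g : Γ) (i : Fin n), Θ g i = f g i)
    (η : Γ → ZMod 2) (hG : Θ * Θᵀ = ∑ g : Γ, η g • rreg Γ g) :
    (Θᵀ * lreg Γ 1 * Θ = 1) ∧
      (∀ g h : Γ, Θᵀ * lreg Γ (g * h) * Θ = (Θᵀ * lreg Γ g * Θ) * (Θᵀ * lreg Γ h * Θ)) ∧
      (∀ g : Γ, (Θᵀ * lreg Γ g * Θ)ᵀ * (Θᵀ * lreg Γ g * Θ) = 1 ∧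
        (Θᵀ * lreg Γ g * Θ) * (Θᵀ * lreg Γ g * Θ)ᵀ = 1) ∧
      ∀ g : Γ, (Θᵀ * lreg Γ g * Θ) *ᵥ f 1 = f g := by
  -- Parseval: Θᵀ * Θ = 1
  have hTT : Θᵀ * Θ = 1 := by
    ext i j
    have h := congrFun (hPF (Pi.single i 1)) j
    simp only [Finset.sum_apply, Pi.smul_apply, smul_eq_mul] at h
    have hsum : ∀ g : Γ, (∑ k, (Pi.single i 1 : Fin n → ZMod 2) k * f g k) = f g i := by
      intro g
      simp [Pi.single_apply, ite_mul, Finset.sum_ite_eq]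
    simp only [hsum] at h
    simp only [Matrix.mul_apply, transpose_apply, Matrix.one_apply, hΘ]
    rw [← h, Pi.single_apply]
    congr 1
    simp only [eq_iff_iff]
    exact eq_comm
  -- G commutes with lreg
  have hcomm : ∀ g : Γ, lreg Γ g * (Θ * Θᵀ) = (Θ * Θᵀ) * lreg Γ g := by
    intro g
    rw [hG, Finset.mul_sum, Finset.sum_mul]
    refine Finset.sum_congr rfl fun h _ => ?_
    rw [Matrix.mul_smul, Matrix.smul_mul, lreg_rreg_comm]
  have hmul : ∀ g h : Γ,
      (Θᵀ * lreg Γ g * Θ) * (Θᵀ * lreg Γ h * Θ) = Θᵀ * lreg Γ (g * h) * Θ := by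
    intro g h
    calc (Θᵀ * lreg Γ g * Θ) * (Θᵀ * lreg Γ h * Θ)
        = Θᵀ * (lreg Γ g * (Θ * Θᵀ)) * (lreg Γ h * Θ) := by
          simp only [Matrix.mul_assoc]
      _ = Θᵀ * Θ * Θᵀ * lreg Γ g * (lreg Γ h * Θ) := by
          rw [hcomm]; simp only [Matrix.mul_assoc]
      _ = Θᵀ * lreg Γ (g * h) * Θ := by
          rw [hTT, Matrix.one_mul, Matrix.mul_assoc (Θᵀ), ← Matrix.mul_assoc (lreg Γ g),
            lreg_mul, Matrix.mul_assoc]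
  have hone : Θᵀ * lreg Γ 1 * Θ = 1 := by
    rw [lreg_one, Matrix.mul_one, hTT]
  have htr : ∀ g : Γ, (Θᵀ * lreg Γ g * Θ)ᵀ = Θᵀ * lreg Γ g⁻¹ * Θ := by
    intro g
    rw [Matrix.transpose_mul, Matrix.transpose_mul, lreg_transpose, transpose_transpose,
      Matrix.mul_assoc]
  refine ⟨hone, fun g h => (hmul g h).symm, fun g => ?_, fun g => ?_⟩
  · constructor
    · rw [htr, hmul, inv_mul_cancel, hone]
    · rw [htr, hmul, mul_inv_cancel, hone]
  · -- action on f 1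
    have hf1 : f 1 = Θᵀ *ᵥ Pi.single 1 1 := by
      ext i
      simp only [Matrix.mulVec, dotProduct, transpose_apply, Pi.single_apply, mul_ite,
        mul_one, mul_zero, Finset.sum_ite_eq', Finset.mem_univ, if_true, hΘ]
    have key : (Θᵀ * lreg Γ g * Θ) * Θᵀ = Θᵀ * lreg Γ g := by
      calc (Θᵀ * lreg Γ g * Θ) * Θᵀ = Θᵀ * (lreg Γ g * (Θ * Θᵀ)) := by
            simp only [Matrix.mul_assoc]
        _ = Θᵀ * Θ * (Θᵀ * lreg Γ g) := by rw [hcomm]; simp only [Matrix.mul_assoc]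
        _ = Θᵀ * lreg Γ g := by rw [hTT, Matrix.one_mul]
    rw [hf1, Matrix.mulVec_mulVec, key]
    ext i
    simp only [Matrix.mulVec, dotProduct, Pi.single_apply, mul_ite, mul_one, mul_zero,
      Finset.sum_ite_eq', Finset.mem_univ, if_true, Matrix.mul_apply, transpose_apply,
      lreg, of_apply, inv_one]
    simp [hΘ, Finset.sum_ite_eq]
end

section
/- Let Γ be a finite group and f : Γ → (Fin n → ZMod 2) a binary Parseval frame indexed by Γ, with Gramian G. Then the following are equivalent: (i) there exists ρ : Γ → Matrix (Fin n) (Fin n) (ZMod 2) with ρ 1 = 1, ρ (g * h) = ρ g * ρ h, and f g = ρ g *ᵥ f 1 for all g, h ∈ Γ (i.e., f is a binary Parseval Γ-frame); (ii) there exists η : Γ → ZMod 2 with G = ∑ g ∈ Γ, η g • R g, where R g is the right regular representation matrix. -/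
open Matrix

section aux

set_option linter.unusedSectionVars false

variable {Γ : Type*} [Group Γ] [Fintype Γ] [DecidableEq Γ] {n : ℕ}

lemma factA (f : Γ → Fin n → ZMod 2) (hPF : IsBPF f) (G : Matrix Γ Γ (ZMod 2))
    (hG : ∀ a b : Γ, G a b = ∑ i, f b i * f a i) (b : Γ) :
    f b = ∑ g, G g b • f g := by
  have h := hPF (f b)
  simp only [← hG] at h
  exact h

lemma Gsym (f : Γ → Fin n → ZMod 2) (G : Matrix Γ Γ (ZMod 2))
    (hG : ∀ a b : Γ, G a b = ∑ i, f b i * f a i) (a b : Γ) :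
    G a b = G b a := by
  rw [hG, hG]
  exact Finset.sum_congr rfl fun i _ => mul_comm _ _

/-- key identity `K = K * G` for group frames. -/
lemma eq1 (f : Γ → Fin n → ZMod 2) (hPF : IsBPF f) (G : Matrix Γ Γ (ZMod 2))
    (hG : ∀ a b : Γ, G a b = ∑ i, f b i * f a i)
    (ρ : Γ → Matrix (Fin n) (Fin n) (ZMod 2))
    (hρ2 : ∀ g h : Γ, ρ (g * h) = ρ g * ρ h) (hρ3 : ∀ g : Γ, f g = ρ g *ᵥ f 1)
    (c a b : Γ) :
    G (c*a) (c*b) = ∑ g, G (c*a) (c*g) * G g b := by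
  have hshift : ∀ u v : Γ, f (u * v) = ρ u *ᵥ f v := by
    intro u v
    rw [hρ3 (u*v), hρ2, ← mulVec_mulVec, ← hρ3]
  have hfb : f (c*b) = ∑ g, G g b • f (c*g) := by
    calc f (c*b) = ρ c *ᵥ f b := hshift c b
    _ = (ρ c).mulVecLin (∑ g, G g b • f g) := by rw [← factA f hPF G hG b]; rfl
    _ = ∑ g, (ρ c).mulVecLin (G g b • f g) := map_sum _ _ _
    _ = ∑ g, G g b • f (c*g) := by
        refine Finset.sum_congr rfl fun g _ => ?_
        rw [mulVecLin_apply, Matrix.mulVec_smul, ← hshift]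
  rw [hG, hfb]
  simp only [Finset.sum_apply, Pi.smul_apply, smul_eq_mul, Finset.sum_mul]
  rw [Finset.sum_comm]
  refine Finset.sum_congr rfl fun g _ => ?_
  calc ∑ i, G g b * f (c*g) i * f (c*a) i
      = G g b * ∑ i, f (c*g) i * f (c*a) i := by
        rw [Finset.mul_sum]; exact Finset.sum_congr rfl fun i _ => mul_assoc _ _ _
    _ = G (c*a) (c*g) * G g b := by rw [← hG]; exact mul_comm _ _

/-- shift invariance of the Gramian of a group frame -/
lemma Ginv (f : Γ → Fin n → ZMod 2) (hPF : IsBPF f) (G : Matrix Γ Γ (ZMod 2))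
    (hG : ∀ a b : Γ, G a b = ∑ i, f b i * f a i)
    (ρ : Γ → Matrix (Fin n) (Fin n) (ZMod 2))
    (hρ2 : ∀ g h : Γ, ρ (g * h) = ρ g * ρ h) (hρ3 : ∀ g : Γ, f g = ρ g *ᵥ f 1)
    (c a b : Γ) :
    G (c*a) (c*b) = G a b := by
  -- G = G * K
  have e2 : ∀ a b : Γ, G a b = ∑ g, G a g * G (c*g) (c*b) := by
    intro a b
    have h := eq1 f hPF G hG ρ hρ2 hρ3 c⁻¹ (c*a) (c*b)
    simp only [inv_mul_cancel_left] at h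
    rw [h]
    refine (Fintype.sum_equiv (Equiv.mulLeft c) _ _ fun g => ?_).symm
    simp only [Equiv.coe_mulLeft, inv_mul_cancel_left]
  -- transpose : G = K * G
  have e2' : G a b = ∑ g, G (c*a) (c*g) * G g b := by
    rw [Gsym f G hG a b, e2 b a]
    refine Finset.sum_congr rfl fun g _ => ?_
    rw [Gsym f G hG b g, Gsym f G hG (c*g) (c*a), mul_comm]
  rw [eq1 f hPF G hG ρ hρ2 hρ3 c a b, ← e2']
end aux

theorem stmt3 {Γ : Type*} [Group Γ] [Fintype Γ] [DecidableEq Γ] {n : ℕ}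
    (f : Γ → Fin n → ZMod 2) (hPF : IsBPF f)
    (G : Matrix Γ Γ (ZMod 2)) (hG : ∀ a b : Γ, G a b = ∑ i, f b i * f a i) :
    (∃ ρ : Γ → Matrix (Fin n) (Fin n) (ZMod 2),
        ρ 1 = 1 ∧ (∀ g h : Γ, ρ (g * h) = ρ g * ρ h) ∧ ∀ g : Γ, f g = ρ g *ᵥ f 1) ↔
      ∃ η : Γ → ZMod 2, G = ∑ g : Γ, η g • rreg Γ g := by
  constructor
  · rintro ⟨ρ, hρ1, hρ2, hρ3⟩
    refine ⟨fun g => G 1 g, ?_⟩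
    ext a b
    have hr : (∑ g : Γ, G 1 g • rreg Γ g) a b = G 1 (a⁻¹ * b) := by
      simp [rreg, Matrix.sum_apply, mul_ite, mul_one, mul_zero, Finset.sum_ite_eq]
    rw [hr]
    have h := Ginv f hPF G hG ρ hρ2 hρ3 a 1 (a⁻¹ * b)
    simpa using h
  · rintro ⟨η, hη⟩
    have hent : ∀ a b : Γ, G a b = η (a⁻¹ * b) := by
      intro a b
      rw [hη]
      simp [rreg, Matrix.sum_apply, mul_ite, mul_one, mul_zero, Finset.sum_ite_eq]
    have hinv : ∀ c a b : Γ, G (c*a) (c*b) = G a b := by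
      intro c a b
      rw [hent, hent]
      congr 1
      group
    set ρ : Γ → Matrix (Fin n) (Fin n) (ZMod 2) :=
      fun g => Matrix.of fun i j => ∑ h : Γ, f h j * f (g*h) i with hρdef
    have hvec : ∀ (g : Γ) (x : Fin n → ZMod 2),
        ρ g *ᵥ x = ∑ h : Γ, (∑ j, x j * f h j) • f (g*h) := by
      intro g x
      ext i
      simp only [mulVec, dotProduct, hρdef, Matrix.of_apply, Finset.sum_apply,
        Pi.smul_apply, smul_eq_mul, Finset.sum_mul]
      rw [Finset.sum_comm]
      exact Finset.sum_congr rfl fun h _ => Finset.sum_congr rfl fun j _ => by ring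
    have hfk : ∀ g k : Γ, ρ g *ᵥ f k = f (g*k) := by
      intro g k
      rw [hvec]
      calc ∑ h : Γ, (∑ j, f k j * f h j) • f (g*h)
          = ∑ h : Γ, G (g*h) (g*k) • f (g*h) :=
            Finset.sum_congr rfl fun h _ => by rw [hinv g h k, hG]
        _ = ∑ h : Γ, G h (g*k) • f h :=
            Fintype.sum_equiv (Equiv.mulLeft g) _ _ fun h => by simp
        _ = f (g*k) := (factA f hPF G hG (g*k)).symm
    have hext : ∀ (M N : Matrix (Fin n) (Fin n) (ZMod 2)),
        (∀ x, M *ᵥ x = N *ᵥ x) → M = N := by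
      intro M N h
      ext i j
      have := congrFun (h (Pi.single j 1)) i
      simpa [Matrix.mulVec_single] using this
    refine ⟨ρ, ?_, ?_, ?_⟩
    · refine hext _ _ fun x => ?_
      rw [hvec, one_mulVec]
      simp only [one_mul]
      exact (hPF x).symm
    · intro g h
      refine hext _ _ fun x => ?_
      rw [← mulVec_mulVec, hvec h x]
      symm
      calc ρ g *ᵥ (∑ k : Γ, (∑ j, x j * f k j) • f (h*k))
          = (ρ g).mulVecLin (∑ k : Γ, (∑ j, x j * f k j) • f (h*k)) := rfl
        _ = ∑ k : Γ, (ρ g).mulVecLin ((∑ j, x j * f k j) • f (h*k)) := map_sum _ _ _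
        _ = ∑ k : Γ, (∑ j, x j * f k j) • f (g*h*k) := by
            refine Finset.sum_congr rfl fun k _ => ?_
            rw [mulVecLin_apply, Matrix.mulVec_smul, hfk, mul_assoc]
        _ = ρ (g*h) *ᵥ x := (hvec (g*h) x).symm
    · intro g
      rw [hfk g 1, mul_one]
end

section
/- Let Γ be a finite abelian group of odd order. For g ∈ Γ define O g := {h ∈ Γ | ∃ m : ℕ, h = g ^ (2 ^ m)}. Then: (a) for all g, h ∈ Γ, either O g = O h or O g ∩ O h = ∅ (so these sets partition Γ, since g ∈ O g); and (b) a function η : Γ → ZMod 2 is idempotent under convolution (η h = ∑ g ∈ Γ, η g * η (g⁻¹ * h) for all h) if and only if η is constant on each set O g, equivalently if and only if η (g * g) = η g for all g ∈ Γ. -/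
set_option linter.unusedSectionVars false

/-- The doubling orbit of `g`: all iterated squares of `g`. -/
def dblOrbit {Γ : Type*} [Group Γ] (g : Γ) : Set Γ :=
  {h | ∃ m : ℕ, h = g ^ (2 ^ m)}

section aux
variable {Γ : Type*} [CommGroup Γ] [Fintype Γ]

lemma dblOrbit_refl [Group Γ] (g : Γ) : g ∈ dblOrbit g := ⟨0, by simp⟩

lemma dblOrbit_trans {g h k : Γ} (h1 : h ∈ dblOrbit g) (h2 : k ∈ dblOrbit h) :
    k ∈ dblOrbit g := by
  obtain ⟨m, rfl⟩ := h1
  obtain ⟨l, rfl⟩ := h2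
  exact ⟨m + l, by rw [← pow_mul, pow_add]⟩

lemma dblOrbit_symm (hodd : Odd (Fintype.card Γ)) {g h : Γ} (h1 : h ∈ dblOrbit g) :
    g ∈ dblOrbit h := by
  obtain ⟨m, rfl⟩ := h1
  have hog : Odd (orderOf g) := hodd.of_dvd_nat (orderOf_dvd_card)
  have hco : Nat.Coprime 2 (orderOf g) := hog.coprime_two_left
  set t := Nat.totient (orderOf g) with ht
  have ht1 : 1 ≤ t := Nat.totient_pos.2 (orderOf_pos g)
  have hmod : (2 : ℕ) ^ t ≡ 1 [MOD orderOf g] := Nat.ModEq.pow_totient hco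
  refine ⟨t * (m + 1) - m, ?_⟩
  have hle : m ≤ t * (m + 1) := le_trans (Nat.le_succ m) (Nat.le_mul_of_pos_left _ ht1)
  have : (g ^ 2 ^ m) ^ 2 ^ (t * (m + 1) - m) = g ^ 2 ^ (t * (m + 1)) := by
    rw [← pow_mul, ← pow_add, Nat.add_sub_cancel' hle]
  rw [this]
  have : (2 : ℕ) ^ (t * (m + 1)) ≡ 1 [MOD orderOf g] := by
    rw [pow_mul]
    simpa using hmod.pow (m + 1)
  have := (pow_eq_pow_iff_modEq (x := g)).2 (this.trans (Nat.ModEq.refl 1))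
  simpa using this.symm

lemma sq_inj (hodd : Odd (Fintype.card Γ)) : Function.Injective (fun g : Γ => g * g) := by
  intro a b hab
  simp only at hab
  have h1 : (a * b⁻¹) ^ 2 = 1 := by
    rw [mul_pow, inv_pow, pow_two, pow_two, hab, mul_inv_cancel]
  have h2 : orderOf (a * b⁻¹) ∣ 2 := orderOf_dvd_of_pow_eq_one h1
  have h3 : orderOf (a * b⁻¹) ∣ Fintype.card Γ := orderOf_dvd_card
  have hco : Nat.Coprime 2 (Fintype.card Γ) := hodd.coprime_two_left
  have : orderOf (a * b⁻¹) = 1 := Nat.eq_one_of_dvd_coprimes hco h2 h3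
  have : a * b⁻¹ = 1 := orderOf_eq_one_iff.1 this
  exact mul_inv_eq_one.1 this

lemma inv_mul_h (a h : Γ) : (a⁻¹ * h)⁻¹ * h = a := by
  rw [mul_inv_rev, inv_inv, mul_assoc, mul_comm a h, ← mul_assoc, inv_mul_cancel, one_mul]

lemma conv_eq (hodd : Odd (Fintype.card Γ)) (η : Γ → ZMod 2) (r : Γ) :
    ∑ g : Γ, η g * η (g⁻¹ * (r * r)) = η r := by
  classical
  have hmulself : ∀ a : ZMod 2, a * a = a := by decide
  have key : ∑ g ∈ Finset.univ.erase r, η g * η (g⁻¹ * (r * r)) = 0 := by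
    refine Finset.sum_involution (fun a _ => a⁻¹ * (r * r)) ?_ ?_ ?_ ?_
    · intro a _
      rw [inv_mul_h, mul_comm (η (a⁻¹ * (r * r))) (η a)]
      exact CharTwo.add_self_eq_zero _
    · intro a ha _ hne
      replace hne : a⁻¹ * (r * r) = a := hne
      have haa : a * a = r * r := by
        rw [← mul_inv_cancel_left a (r * r), hne]
      exact (Finset.ne_of_mem_erase ha) (sq_inj hodd haa)
    · intro a ha
      rcases Finset.mem_erase.1 ha with ⟨hane, _⟩
      refine Finset.mem_erase.2 ⟨?_, Finset.mem_univ _⟩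
      intro heq
      replace heq : a⁻¹ * (r * r) = r := heq
      apply hane
      have h1 : r * r = a * r := by
        rw [← mul_inv_cancel_left a (r * r), heq]
      exact mul_right_cancel h1.symm
    · intro a _; exact inv_mul_h a (r * r)
  calc ∑ g : Γ, η g * η (g⁻¹ * (r * r))
      = η r * η (r⁻¹ * (r * r)) + ∑ g ∈ Finset.univ.erase r, η g * η (g⁻¹ * (r * r)) :=
        (Finset.add_sum_erase _ _ (Finset.mem_univ r)).symm
    _ = η r := by
        rw [key, add_zero, inv_mul_cancel_left, hmulself]

end aux

theorem stmt9 {Γ : Type*} [CommGroup Γ] [Fintype Γ]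
    (hodd : Odd (Fintype.card Γ)) (η : Γ → ZMod 2) :
    (∀ g : Γ, g ∈ dblOrbit g) ∧
      (∀ g h : Γ, dblOrbit g = dblOrbit h ∨ dblOrbit g ∩ dblOrbit h = ∅) ∧
      ((∀ h : Γ, η h = ∑ g : Γ, η g * η (g⁻¹ * h)) ↔
        ∀ g h : Γ, h ∈ dblOrbit g → η h = η g) ∧
      ((∀ h : Γ, η h = ∑ g : Γ, η g * η (g⁻¹ * h)) ↔
        ∀ g : Γ, η (g * g) = η g) := by
  classical
  -- squaring is surjective
  have hsurj : Function.Surjective (fun g : Γ => g * g) :=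
    Finite.surjective_of_injective (sq_inj hodd)
  have conv_iff : (∀ h : Γ, η h = ∑ g : Γ, η g * η (g⁻¹ * h)) ↔
      ∀ g : Γ, η (g * g) = η g := by
    constructor
    · intro H g
      have := H (g * g)
      rw [conv_eq hodd η g] at this
      exact this
    · intro H h
      obtain ⟨r, hr⟩ := hsurj h
      simp only at hr
      rw [← hr, conv_eq hodd η r, H r]
  have orbit_iff : (∀ g h : Γ, h ∈ dblOrbit g → η h = η g) ↔
      ∀ g : Γ, η (g * g) = η g := by
    constructor
    · intro H g
      exact H g (g * g) ⟨1, by norm_num [pow_two]⟩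
    · intro H g h hmem
      obtain ⟨m, rfl⟩ := hmem
      induction m with
      | zero => simp
      | succ m ih =>
        have : g ^ 2 ^ (m + 1) = g ^ 2 ^ m * g ^ 2 ^ m := by
          rw [pow_succ, pow_mul, pow_two]
        rw [this, H (g ^ 2 ^ m), ih]
  refine ⟨fun g => dblOrbit_refl g, ?_, conv_iff.trans orbit_iff.symm, conv_iff⟩
  intro g h
  by_cases hdisj : dblOrbit g ∩ dblOrbit h = ∅
  · exact Or.inr hdisj
  · left
    obtain ⟨x, hxg, hxh⟩ := Set.nonempty_iff_ne_empty.2 hdisj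
    ext y
    constructor
    · intro hy
      exact dblOrbit_trans (dblOrbit_trans hxh (dblOrbit_symm hodd hxg)) hy
    · intro hy
      exact dblOrbit_trans (dblOrbit_trans hxg (dblOrbit_symm hodd hxh)) hy
end

section
/- Let Γ be a finite group with right regular representation matrices R g, let f : Γ → (Fin n → ZMod 2) be a binary Parseval Γ-frame with Gramian G, and let η : Γ → ZMod 2 satisfy G = ∑ g ∈ Γ, η g • R g. Then for a matrix H : Matrix Γ Γ (ZMod 2) the following are equivalent: (i) there exists a binary Parseval Γ-frame f' : Γ → (Fin n → ZMod 2) with Gramian H that is automorphically switching equivalent to f, i.e. there exist a unitary matrix U : Matrix (Fin n) (Fin n) (ZMod 2) (Uᵀ * U = 1 and U * Uᵀ = 1) and a group automorphism σ of Γ with f' g = U *ᵥ f (σ g) for all g ∈ Γ; (ii) there exists a group automorphism σ of Γ with H = ∑ g ∈ Γ, η (σ g) • R g. -/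
open Matrix

lemma sum_rreg_apply {Γ : Type*} [Group Γ] [Fintype Γ] [DecidableEq Γ]
    (η : Γ → ZMod 2) (a b : Γ) :
    (∑ g : Γ, η g • rreg Γ g) a b = η (a⁻¹ * b) := by
  simp only [Matrix.sum_apply, Matrix.smul_apply, rreg, Matrix.of_apply, smul_eq_mul,
    mul_ite, mul_one, mul_zero]
  simp [Finset.sum_ite_eq]

theorem stmt12 {Γ : Type*} [Group Γ] [Fintype Γ] [DecidableEq Γ] {n : ℕ}
    (f : Γ → Fin n → ZMod 2) (hPF : IsBPF f)
    (hΓframe : ∃ ρ : Γ → Matrix (Fin n) (Fin n) (ZMod 2),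
      ρ 1 = 1 ∧ (∀ g h : Γ, ρ (g * h) = ρ g * ρ h) ∧ ∀ g : Γ, f g = ρ g *ᵥ f 1)
    (G : Matrix Γ Γ (ZMod 2)) (hG : ∀ a b : Γ, G a b = ∑ i, f b i * f a i)
    (η : Γ → ZMod 2) (hη : G = ∑ g : Γ, η g • rreg Γ g)
    (H : Matrix Γ Γ (ZMod 2)) :
    (∃ f' : Γ → Fin n → ZMod 2, IsBPF f' ∧
        (∃ ρ' : Γ → Matrix (Fin n) (Fin n) (ZMod 2),
          ρ' 1 = 1 ∧ (∀ g h : Γ, ρ' (g * h) = ρ' g * ρ' h) ∧ ∀ g : Γ, f' g = ρ' g *ᵥ f' 1) ∧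
        (∀ a b : Γ, H a b = ∑ i, f' b i * f' a i) ∧
        ∃ (U : Matrix (Fin n) (Fin n) (ZMod 2)) (σ : Γ ≃* Γ),
          Uᵀ * U = 1 ∧ U * Uᵀ = 1 ∧ ∀ g : Γ, f' g = U *ᵥ f (σ g)) ↔
      ∃ σ : Γ ≃* Γ, H = ∑ g : Γ, η (σ g) • rreg Γ g := by
  constructor
  · rintro ⟨f', hPF', hframe', hH', U, σ, hU1, hU2, hf'⟩
    refine ⟨σ, ?_⟩
    have key : ∀ x y : Fin n → ZMod 2,
        ∑ i, (U *ᵥ x) i * (U *ᵥ y) i = ∑ i, x i * y i := by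
      intro x y
      have h : (U *ᵥ x) ⬝ᵥ (U *ᵥ y) = x ⬝ᵥ y := by
        rw [← Matrix.vecMul_transpose, ← Matrix.dotProduct_mulVec, Matrix.mulVec_mulVec,
          hU1, Matrix.one_mulVec]
      simpa [dotProduct] using h
    ext a b
    rw [sum_rreg_apply, hH' a b, hf' a, hf' b, key, ← hG, hη, sum_rreg_apply,
      ← map_inv, ← _root_.map_mul]
  · rintro ⟨σ, hHσ⟩
    obtain ⟨ρ, hρ1, hρm, hρf⟩ := hΓframe
    refine ⟨fun g => f (σ g), ?_, ⟨fun g => ρ (σ g), by simp [hρ1],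
      fun g h => by simp [_root_.map_mul, hρm], fun g => by simp [map_one σ]; exact hρf (σ g)⟩,
      ?_, 1, σ, by simp, by simp, fun g => by rw [Matrix.one_mulVec]⟩
    · intro x
      exact (hPF x).trans (Equiv.sum_comp σ.toEquiv
        (fun j => (∑ i, x i * f j i) • f j)).symm
    · intro a b
      rw [hHσ, sum_rreg_apply, _root_.map_mul, map_inv, show η ((σ a)⁻¹ * σ b) = G (σ a) (σ b)
        from by rw [hη, sum_rreg_apply], hG]
end

section
/- Let p be a prime, q ≥ 1 a natural number, and k a natural number with 1 < k < p; assume moreover that k ^ (p - 1) is not congruent to 1 modulo p² (equivalently, the multiplicative order of k modulo p² is p times its order modulo p). Then the multiplicative order of the unit determined by k in (ZMod (p ^ q))ˣ equals p ^ (q - 1) times the multiplicative order of the unit determined by k in (ZMod p)ˣ; equivalently, the cyclic subgroup of (ZMod (p ^ q))ˣ generated by k has cardinality p ^ (q - 1) times the cardinality of the cyclic subgroup of (ZMod p)ˣ generated by k. Moreover, a unit x ∈ (ZMod (p ^ q))ˣ lies in the subgroup generated by k if and only if its reduction modulo p (under the ring homomorphism ZMod (p ^ q) → ZMod p) lies in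 the subgroup of (ZMod p)ˣ generated by k. -/
/-!
Let `d` be the order of `k` modulo `p`. Since `d ∣ p - 1`, the hypothesis forces
`k ^ d = 1 + p * a` with `p ∤ a`, and for odd `p` such an element has order exactly
`p ^ (q - 1)` modulo `p ^ q`. As `d` divides the order of `k` modulo `p ^ q`, that order is
`p ^ (q - 1) * d`. The subgroup generated by `k` is contained in the preimage of its reduction,
and both have index `(p - 1) / d`, so they coincide.
-/

theorem Subgroup.zpowers_eq_comap_zpowers_of_index_eq {G H : Type*} [Group G] [Group H]
    [Finite G] {f : G →* H} (hf : Function.Surjective f) {u : G} {v : H} (huv : f u = v)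
    (hindex : (Subgroup.zpowers u).index = (Subgroup.zpowers v).index) :
    Subgroup.zpowers u = (Subgroup.zpowers v).comap f := by
  refine Subgroup.eq_of_le_of_card_ge (Subgroup.zpowers_le.2 (by simp [huv])) ?_
  have hcomap := Subgroup.card_mul_index ((Subgroup.zpowers v).comap f)
  rw [Subgroup.index_comap_of_surjective _ hf, ← hindex,
    ← Subgroup.card_mul_index (Subgroup.zpowers u)] at hcomap
  exact (Nat.eq_of_mul_eq_mul_right (Nat.pos_of_ne_zero Subgroup.index_ne_zero_of_finite)
    hcomap).le

theorem ZMod.orderOf_natCast_of_modEq_one_of_not_modEq {p : ℕ} (hp : p.Prime) (hp2 : p ≠ 2)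
    {b : ℕ} (h1 : b ≡ 1 [MOD p]) (h2 : ¬ b ≡ 1 [MOD p ^ 2]) (n : ℕ) :
    orderOf (b : ZMod (p ^ (n + 1))) = p ^ n := by
  obtain ⟨a, ha⟩ : (p : ℤ) ∣ b - 1 := Nat.modEq_iff_dvd.1 h1.symm
  have hpa : ¬ (p : ℤ) ∣ a := by
    rintro ⟨c, rfl⟩
    refine h2 (Nat.modEq_iff_dvd.2 ⟨c, ?_⟩).symm
    push_cast
    linear_combination ha
  have hb : (b : ZMod (p ^ (n + 1))) = 1 + p * a := by
    rw [← Int.cast_natCast, show (b : ℤ) = 1 + p * a by linear_combination ha]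
    push_cast; rfl
  rw [hb]
  exact ZMod.orderOf_one_add_mul_prime hp hp2 a hpa n

theorem ZMod.unitsMap_eq_of_val_eq_natCast {m n k : ℕ} (hm : n ∣ m) {u : (ZMod m)ˣ}
    (hu : (u : ZMod m) = k) {v : (ZMod n)ˣ} (hv : (v : ZMod n) = k) : ZMod.unitsMap hm u = v :=
  Units.ext (by simp [ZMod.unitsMap_def, hu, hv])

theorem ZMod.orderOf_unit_prime_pow_of_not_modEq {p k : ℕ} (hp : p.Prime) (hp2 : p ≠ 2)
    (hw : ¬ k ^ (p - 1) ≡ 1 [MOD p ^ 2]) {n : ℕ} {u : (ZMod (p ^ (n + 1)))ˣ}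
    (hu : (u : ZMod (p ^ (n + 1))) = k) {v : (ZMod p)ˣ} (hv : (v : ZMod p) = k) :
    orderOf u = p ^ n * orderOf v := by
  have := Fact.mk hp
  set d := orderOf v
  have hkd : k ^ d ≡ 1 [MOD p] := by
    rw [← ZMod.natCast_eq_natCast_iff, Nat.cast_pow, ← hv, ← Units.val_pow_eq_pow_val,
      pow_orderOf_eq_one, Units.val_one, Nat.cast_one]
  have hkd' : ¬ k ^ d ≡ 1 [MOD p ^ 2] := fun h ↦ hw <| by
    obtain ⟨m, hm⟩ := ZMod.orderOf_units_dvd_card_sub_one v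
    simpa [hm, pow_mul] using h.pow m
  have hud : orderOf (u ^ d) = p ^ n := by
    rw [← orderOf_units, Units.val_pow_eq_pow_val, hu, ← Nat.cast_pow]
    exact ZMod.orderOf_natCast_of_modEq_one_of_not_modEq hp hp2 hkd hkd' n
  have hdu : d ∣ orderOf u := by
    have hpq := dvd_pow_self p n.succ_ne_zero
    simpa only [ZMod.unitsMap_eq_of_val_eq_natCast hpq hu hv] using
      orderOf_map_dvd (ZMod.unitsMap hpq) u
  rw [orderOf_pow_of_dvd (orderOf_pos v).ne' hdu] at hud
  rw [← hud, Nat.div_mul_cancel hdu]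

theorem stmt13 (p q k : ℕ) (hp : p.Prime) (hq : 1 ≤ q) (hk1 : 1 < k) (hkp : k < p)
    (hw : ¬ (k ^ (p - 1) ≡ 1 [MOD p ^ 2]))
    (u : (ZMod (p ^ q))ˣ) (hu : (u : ZMod (p ^ q)) = (k : ZMod (p ^ q)))
    (v : (ZMod p)ˣ) (hv : (v : ZMod p) = (k : ZMod p)) :
    orderOf u = p ^ (q - 1) * orderOf v ∧
      Nat.card (Subgroup.zpowers u) = p ^ (q - 1) * Nat.card (Subgroup.zpowers v) ∧
      ∀ x : (ZMod (p ^ q))ˣ,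
        x ∈ Subgroup.zpowers u ↔
          Units.map (ZMod.castHom (dvd_pow_self p (Nat.one_le_iff_ne_zero.mp hq))
              (ZMod p)).toMonoidHom x ∈ Subgroup.zpowers v := by
  have := Fact.mk hp
  obtain ⟨n, rfl⟩ : ∃ n, q = n + 1 := ⟨q - 1, by omega⟩
  rw [Nat.add_sub_cancel]
  have horder := ZMod.orderOf_unit_prime_pow_of_not_modEq hp (by omega) hw hu hv
  refine ⟨horder, by rw [Nat.card_zpowers, Nat.card_zpowers, horder], fun x ↦ ?_⟩
  have hindex : (Subgroup.zpowers u).index = (Subgroup.zpowers v).index := by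
    have hG := Subgroup.card_mul_index (Subgroup.zpowers u)
    have hH := Subgroup.card_mul_index (Subgroup.zpowers v)
    rw [Nat.card_zpowers, horder, Nat.card_eq_fintype_card, ZMod.card_units_eq_totient,
      Nat.totient_prime_pow_succ hp] at hG
    rw [Nat.card_zpowers, Nat.card_eq_fintype_card, ZMod.card_units] at hH
    rw [← hH, ← mul_assoc] at hG
    exact Nat.eq_of_mul_eq_mul_left (horder ▸ orderOf_pos u) hG
  have hpq := dvd_pow_self p n.succ_ne_zero
  rw [Subgroup.zpowers_eq_comap_zpowers_of_index_eq (ZMod.unitsMap_surjective hpq)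
    (ZMod.unitsMap_eq_of_val_eq_natCast hpq hu hv) hindex]
  rfl
end

section
/- Let p be a prime, q ≥ 1 a natural number, and k a natural number with 1 < k < p and k ^ (p - 1) not congruent to 1 modulo p². Let x', y', r, s be natural numbers with p ∤ x', p ∤ y', x' * p ^ r < p ^ q, and y' * p ^ s < p ^ q. Then there exists l : ℕ with (↑(x' * p ^ r) : ZMod (p ^ q)) = (k : ZMod (p ^ q)) ^ l * ↑(y' * p ^ s) if and only if r = s and there exists l : ℕ with (↑x' : ZMod p) = (k : ZMod p) ^ l * ↑y'. -/
/-!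
Writing `k ^ (p - 1) = 1 + p * a`, the hypothesis says `p ∤ a`, so `k ^ (p - 1)` has order `p ^ n`
in `(ZMod (p ^ (n + 1)))ˣ`. The kernel of reduction modulo `p` has the same order and contains
`k ^ (p - 1)`, hence lies in the subgroup generated by `k`; so a relation `x ≡ k ^ l * y` modulo `p`
lifts to every power of `p`. As for the `p`-power parts, `x' * p ^ r ≡ k ^ l * y' * p ^ s`
modulo `p ^ q` with `r, s < q` forces `r = s` by comparing `p`-adic valuations, after which
`p ^ r` cancels.
-/

open Subgroup

theorem MonoidHom.exists_pow_mul_eq_of_ker_le_zpowers {G H : Type*} [Group G] [Finite G]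
    [Group H] (φ : G →* H) {g : G} (hg : φ.ker ≤ zpowers g) {a b : G} {n : ℕ}
    (h : φ a = φ g ^ n * φ b) : ∃ l : ℕ, a = g ^ l * b := by
  have hker : a * (g ^ n * b)⁻¹ ∈ φ.ker := by
    rw [MonoidHom.mem_ker, map_mul, map_inv, map_mul, map_pow, h, mul_inv_cancel]
  have hab : a * b⁻¹ ∈ zpowers g := by
    simpa [mul_assoc] using mul_mem (hg hker) (pow_mem (mem_zpowers g) n)
  obtain ⟨l, hl⟩ := mem_powers_iff_mem_zpowers.mpr hab
  exact ⟨l, eq_mul_of_mul_inv_eq hl.symm⟩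

namespace ZMod

theorem card_ker_unitsMap_prime_pow (p n : ℕ) [Fact p.Prime] :
    Nat.card (unitsMap (dvd_pow_self p n.succ_ne_zero)).ker = p ^ n := by
  have h := (unitsMap (dvd_pow_self p n.succ_ne_zero)).ker.card_mul_index
  rw [index_ker, MonoidHom.range_eq_top.mpr (unitsMap_surjective _), card_top,
    Nat.card_eq_fintype_card (α := (ZMod p)ˣ), Nat.card_eq_fintype_card (α := (ZMod _)ˣ),
    card_units, card_units_eq_totient, Nat.totient_prime_pow_succ Fact.out] at h
  exact Nat.eq_of_mul_eq_mul_right (Nat.sub_pos_of_lt (Fact.out : p.Prime).one_lt) h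

theorem orderOf_pow_sub_one_of_not_modEq {p k : ℕ} [Fact p.Prime] (hp2 : p ≠ 2)
    (hpk : ¬ p ∣ k) (hk : ¬ k ^ (p - 1) ≡ 1 [MOD p ^ 2]) (n : ℕ) :
    orderOf ((k : ZMod (p ^ (n + 1))) ^ (p - 1)) = p ^ n := by
  have hp : p.Prime := Fact.out
  obtain ⟨a, ha⟩ : (p : ℤ) ∣ (k : ℤ) ^ (p - 1) - 1 := by
    rw [← intCast_zmod_eq_zero_iff_dvd]
    push_cast
    rw [sub_eq_zero]
    exact pow_card_sub_one_eq_one (by rwa [Ne, natCast_eq_zero_iff])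
  have hpa : ¬ (p : ℤ) ∣ a := by
    rintro ⟨b, rfl⟩
    apply hk
    rw [Nat.ModEq.comm, Nat.modEq_iff_dvd]
    exact ⟨b, by push_cast; linear_combination ha⟩
  have hka : (k : ZMod (p ^ (n + 1))) ^ (p - 1) = 1 + p * a := by
    have := congrArg (Int.cast : ℤ → ZMod (p ^ (n + 1))) ha
    push_cast at this
    linear_combination this
  rw [hka]
  exact orderOf_one_add_mul_prime hp hp2 a hpa n

theorem ker_unitsMap_le_zpowers {p k n : ℕ} [Fact p.Prime] (hp2 : p ≠ 2) (hpk : ¬ p ∣ k)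
    (hk : ¬ k ^ (p - 1) ≡ 1 [MOD p ^ 2]) {u : (ZMod (p ^ (n + 1)))ˣ}
    (hu : (u : ZMod (p ^ (n + 1))) = k) :
    (unitsMap (dvd_pow_self p n.succ_ne_zero)).ker ≤ zpowers u := by
  have hmem : u ^ (p - 1) ∈ (unitsMap (dvd_pow_self p n.succ_ne_zero)).ker := by
    rw [MonoidHom.mem_ker, map_pow, Units.ext_iff, Units.val_pow_eq_pow_val, unitsMap_val, hu,
      cast_natCast (dvd_pow_self p n.succ_ne_zero), Units.val_one]
    exact pow_card_sub_one_eq_one (by rwa [Ne, natCast_eq_zero_iff])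
  have hcard : Nat.card (unitsMap (dvd_pow_self p n.succ_ne_zero)).ker
      ≤ Nat.card (zpowers (u ^ (p - 1))) := by
    rw [card_ker_unitsMap_prime_pow, Nat.card_zpowers, ← orderOf_units, Units.val_pow_eq_pow_val,
      hu, orderOf_pow_sub_one_of_not_modEq hp2 hpk hk]
  rw [← eq_of_le_of_card_ge (zpowers_le.mpr hmem) hcard]
  exact zpowers_le.mpr (pow_mem (mem_zpowers u) _)

theorem exists_natCast_eq_pow_mul_iff {p k x y : ℕ} [Fact p.Prime] (hp2 : p ≠ 2)
    (hpk : ¬ p ∣ k) (hk : ¬ k ^ (p - 1) ≡ 1 [MOD p ^ 2]) (hx : ¬ p ∣ x) (hy : ¬ p ∣ y) (n : ℕ) :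
    (∃ l : ℕ, (x : ZMod (p ^ (n + 1))) = k ^ l * y) ↔ ∃ l : ℕ, (x : ZMod p) = k ^ l * y := by
  have hdvd := dvd_pow_self p n.succ_ne_zero
  constructor
  · rintro ⟨l, hl⟩
    exact ⟨l, by simpa using congrArg (castHom hdvd (ZMod p)) hl⟩
  · rintro ⟨l₀, hl₀⟩
    have hcop {a : ℕ} (ha : ¬ p ∣ a) : a.Coprime (p ^ (n + 1)) :=
      .pow_right _ ((Nat.Prime.coprime_iff_not_dvd Fact.out).mpr ha).symm
    obtain ⟨l, hl⟩ := (unitsMap hdvd).exists_pow_mul_eq_of_ker_le_zpowers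
      (ker_unitsMap_le_zpowers hp2 hpk hk (coe_unitOfCoprime k (hcop hpk)))
      (a := unitOfCoprime x (hcop hx)) (b := unitOfCoprime y (hcop hy)) (n := l₀)
      (by ext; simpa [unitsMap_val] using hl₀)
    exact ⟨l, by simpa using congrArg Units.val hl⟩

end ZMod

namespace Nat

theorem le_of_mul_pow_modEq_mul_pow {p a b r s q : ℕ} (hp : p.Prime) (ha : ¬ p ∣ a)
    (hrq : r < q) (h : a * p ^ r ≡ b * p ^ s [MOD p ^ q]) : s ≤ r := by
  by_contra! hrs
  have hdvd : p ^ (r + 1) ∣ a * p ^ r :=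
    (h.dvd_iff (pow_dvd_pow p hrq)).mpr (dvd_mul_of_dvd_right (pow_dvd_pow p hrs) b)
  rw [pow_succ', Nat.mul_dvd_mul_iff_right (pow_pos hp.pos r)] at hdvd
  exact ha hdvd

theorem mul_pow_modEq_mul_pow_iff {p a b r s q : ℕ} (hp : p.Prime) (ha : ¬ p ∣ a)
    (hb : ¬ p ∣ b) (hr : r < q) (hs : s < q) :
    a * p ^ r ≡ b * p ^ s [MOD p ^ q] ↔ r = s ∧ a ≡ b [MOD p ^ (q - r)] := by
  have hq : p ^ q = p ^ (q - r) * p ^ r := by rw [← pow_add, Nat.sub_add_cancel hr.le]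
  constructor
  · intro h
    obtain rfl := le_antisymm (le_of_mul_pow_modEq_mul_pow hp hb hs h.symm)
      (le_of_mul_pow_modEq_mul_pow hp ha hr h)
    rw [hq, ModEq.mul_right_cancel_iff' (pow_ne_zero r hp.ne_zero)] at h
    exact ⟨rfl, h⟩
  · rintro ⟨rfl, h⟩
    rw [hq]
    exact h.mul_right' _

end Nat

theorem stmt14_general (p q k : ℕ) (hp : p.Prime) (hk1 : 1 < k) (hkp : k < p)
    (hw : ¬ (k ^ (p - 1) ≡ 1 [MOD p ^ 2]))
    (x' y' r s : ℕ) (hx' : ¬ p ∣ x') (hy' : ¬ p ∣ y')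
    (hxr : x' * p ^ r < p ^ q) (hys : y' * p ^ s < p ^ q) :
    (∃ l : ℕ, ((x' * p ^ r : ℕ) : ZMod (p ^ q))
        = (k : ZMod (p ^ q)) ^ l * ((y' * p ^ s : ℕ) : ZMod (p ^ q))) ↔
      (r = s ∧ ∃ l : ℕ, ((x' : ℕ) : ZMod p) = (k : ZMod p) ^ l * ((y' : ℕ) : ZMod p)) := by
  have : Fact p.Prime := ⟨hp⟩
  have hpk : ¬ p ∣ k := fun h => (Nat.le_of_dvd (by omega) h).not_gt hkp
  have hpkl (l : ℕ) : ¬ p ∣ k ^ l * y' := fun h =>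
    (hp.dvd_mul.mp h).elim (fun h => hpk (hp.dvd_of_dvd_pow h)) hy'
  have exp_lt {z e : ℕ} (hz : ¬ p ∣ z) (h : z * p ^ e < p ^ q) : e < q :=
    (Nat.pow_lt_pow_iff_right hp.one_lt).mp
      ((Nat.le_mul_of_pos_left _ (Nat.pos_of_ne_zero (by rintro rfl; simp at hz))).trans_lt h)
  have hr := exp_lt hx' hxr
  obtain ⟨n, hn⟩ : ∃ n, q - r = n + 1 := ⟨q - r - 1, by omega⟩
  rw [← ZMod.exists_natCast_eq_pow_mul_iff (by omega) hpk hw hx' hy' n, ← hn]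
  simp only [← Nat.cast_pow, ← Nat.cast_mul, ZMod.natCast_eq_natCast_iff, ← mul_assoc,
    Nat.mul_pow_modEq_mul_pow_iff hp hx' (hpkl _) hr (exp_lt hy' hys), exists_and_left]

theorem stmt14 (p q k : ℕ) (hp : p.Prime) (hq : 1 ≤ q) (hk1 : 1 < k) (hkp : k < p)
    (hw : ¬ (k ^ (p - 1) ≡ 1 [MOD p ^ 2]))
    (x' y' r s : ℕ) (hx' : ¬ p ∣ x') (hy' : ¬ p ∣ y')
    (hxr : x' * p ^ r < p ^ q) (hys : y' * p ^ s < p ^ q) :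
    (∃ l : ℕ, ((x' * p ^ r : ℕ) : ZMod (p ^ q))
        = (k : ZMod (p ^ q)) ^ l * ((y' * p ^ s : ℕ) : ZMod (p ^ q))) ↔
      (r = s ∧ ∃ l : ℕ, ((x' : ℕ) : ZMod p) = (k : ZMod p) ^ l * ((y' : ℕ) : ZMod p)) :=
  stmt14_general p q k hp hk1 hkp hw x' y' r s hx' hy' hxr hys
end
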